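/- The algebra Ĥ decomposes as the internal direct sum Ĥ = 𝔽·â₀ ⊕ H₀ ⊕ H₂ ⊕ H₋₂, and for z ∈ {0, 2, −2} the subspace H_z is exactly the z-eigenspace of the multiplication operator ad_{â₀} : x ↦ â₀·x. -/

import Mathlib

/-!
On the spanning vectors `ad_{â₀}` acts by `-4` on `â₀`, `0` on `û_i`, `-3` on `v̂_i` and `-2` on
`ŵ_i`, `w̄_i` in every characteristic, whereas `ad_{â₀} ū_i = -5 v̂_i`: characteristic 5 is what
puts `ū_i` into the kernel, and there `-4, 0, -3, -2` are the distinct scalars `1, 0, 2, -2`.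
Six times any basis vector of `Ĥ` is an integral combination of `â₀` and the spanning vectors,
and 6 is a unit, so the four subspaces span `Ĥ`. Subspaces of eigenspaces for distinct
eigenvalues that together span the space are independent and equal to those eigenspaces.
-/

namespace HatAlgebra

/-- Basis of the algebra `Ĥ`: vectors `â i` for `i : ℤ`, `ŝ_{0̄,j}` for `j` a positive
integer, and `ŝ_{1̄,3k}`, `ŝ_{2̄,3k}` for `k` a positive integer. -/
inductive HatB : Type
  | a : ℤ → HatB
  | s0 : ℕ+ → HatB
  | s1 : ℕ+ → HatB
  | s2 : ℕ+ → HatB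
  deriving DecidableEq

variable (F : Type*) [Field F]

/-- The underlying vector space of `Ĥ`: the free `F`-vector space on `HatB`. -/
abbrev HatH : Type _ := HatB →₀ F

/-- The basis vector `â i`. -/
noncomputable def aHat (i : ℤ) : HatH F := Finsupp.single (HatB.a i) 1

/-- The element `ŝ_{r̄,j}` of `Ĥ`, with the conventions `ŝ_{r̄,0} = 0` and
`ŝ_{1̄,j} = ŝ_{0̄,j} = ŝ_{2̄,j}` whenever `3 ∤ j`. -/
noncomputable def sHat (r : ZMod 3) (j : ℕ) : HatH F :=
  if h : j = 0 then 0
  else if h3 : 3 ∣ j then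
    if r = 0 then Finsupp.single (HatB.s0 ⟨j, Nat.pos_of_ne_zero h⟩) 1
    else if r = 1 then
      Finsupp.single (HatB.s1 ⟨j / 3,
        Nat.div_pos (Nat.le_of_dvd (Nat.pos_of_ne_zero h) h3) (by norm_num)⟩) 1
    else
      Finsupp.single (HatB.s2 ⟨j / 3,
        Nat.div_pos (Nat.le_of_dvd (Nat.pos_of_ne_zero h) h3) (by norm_num)⟩) 1
  else Finsupp.single (HatB.s0 ⟨j, Nat.pos_of_ne_zero h⟩) 1

/-- The operation `∗`: `(−1) ∗ 1̄ = −1`, `(−1) ∗ 2̄ = 1`, `0 ∗ t̄ = 0`. -/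
def hatStar (x : ℤ) (t : ZMod 3) : ℤ :=
  if x = 0 then 0 else if t = 1 then -1 else if t = 2 then 1 else 0

/-- The coefficient `(δ_{ī,r̄} − 1) ∗ (ī − r̄)` appearing in rule (Ĥ2). -/
def hatC (i r : ZMod 3) : ℤ := hatStar ((if i = r then 1 else 0) - 1) (i - r)

/-- Rule (Ĥ2): the product `â_i · ŝ_{r̄,j}`. -/
noncomputable def aMulS (i : ℤ) (r : ZMod 3) (j : ℕ) : HatH F :=
  (-2 : F) • aHat F i + (aHat F (i - (j : ℤ)) + aHat F (i + (j : ℤ))) - sHat F r j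
    - (hatC (i : ZMod 3) r : F) • (sHat F (r - 1) j - sHat F (r + 1) j)

/-- `ŝ_{0̄,n} + ŝ_{1̄,n} + ŝ_{2̄,n}`. -/
noncomputable def sSum (n : ℕ) : HatH F := sHat F 0 n + sHat F 1 n + sHat F 2 n

/-- For `r ≠ t` in `ℤ/3ℤ`, the signed sum `ŝ_{r̄,n} + ŝ_{t̄,n} − ŝ_{m̄,n}` where `m̄`
is the third residue class (appearing in rules (Ĥ5), (Ĥ6), (Ĥ7)). -/
noncomputable def sT (r t : ZMod 3) (n : ℕ) : HatH F :=
  sHat F r n + sHat F t n - sHat F (-(r + t)) n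

/-- Rules (Ĥ3)–(Ĥ7): the product `ŝ_{r̄,i} · ŝ_{t̄,j}`. -/
noncomputable def sMulS (r : ZMod 3) (i : ℕ) (t : ZMod 3) (j : ℕ) : HatH F :=
  if 3 ∣ i ∧ 3 ∣ j then
    if r = t then
      (2 : F) • (sHat F r i + sHat F r j) - (sHat F r (Nat.dist i j) + sHat F r (i + j))
    else
      (2 : F) • (sT F r t i + sT F r t j) - (sT F r t (Nat.dist i j) + sT F r t (i + j))
  else
    (2 : F) • (sHat F r i + sHat F t j) - (2 : F) • (sSum F (Nat.dist i j) + sSum F (i + j))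

/-- The product of `Ĥ` on basis vectors, given by rules (Ĥ1)–(Ĥ7) (extended
symmetrically, since the product is commutative). -/
noncomputable def mulB : HatB → HatB → HatH F
  | .a i, .a j => (-2 : F) • (aHat F i + aHat F j) + sHat F (i : ZMod 3) (i - j).natAbs
  | .a i, .s0 j => aMulS F i 0 (j : ℕ)
  | .s0 j, .a i => aMulS F i 0 (j : ℕ)
  | .a i, .s1 k => aMulS F i 1 (3 * (k : ℕ))
  | .s1 k, .a i => aMulS F i 1 (3 * (k : ℕ))
  | .a i, .s2 k => aMulS F i 2 (3 * (k : ℕ))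
  | .s2 k, .a i => aMulS F i 2 (3 * (k : ℕ))
  | .s0 i, .s0 j => sMulS F 0 (i : ℕ) 0 (j : ℕ)
  | .s0 i, .s1 k => sMulS F 0 (i : ℕ) 1 (3 * (k : ℕ))
  | .s1 k, .s0 i => sMulS F 0 (i : ℕ) 1 (3 * (k : ℕ))
  | .s0 i, .s2 k => sMulS F 0 (i : ℕ) 2 (3 * (k : ℕ))
  | .s2 k, .s0 i => sMulS F 0 (i : ℕ) 2 (3 * (k : ℕ))
  | .s1 h, .s1 k => sMulS F 1 (3 * (h : ℕ)) 1 (3 * (k : ℕ))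
  | .s1 h, .s2 k => sMulS F 1 (3 * (h : ℕ)) 2 (3 * (k : ℕ))
  | .s2 k, .s1 h => sMulS F 1 (3 * (h : ℕ)) 2 (3 * (k : ℕ))
  | .s2 h, .s2 k => sMulS F 2 (3 * (h : ℕ)) 2 (3 * (k : ℕ))

/-- The commutative bilinear product of `Ĥ`, as a bilinear map. -/
noncomputable def hatMul : HatH F →ₗ[F] HatH F →ₗ[F] HatH F :=
  Finsupp.lift (HatH F →ₗ[F] HatH F) F HatB fun x => Finsupp.lift (HatH F) F HatB (mulB F x)

/-- The product of two elements of `Ĥ`. -/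
noncomputable def hmul (x y : HatH F) : HatH F := hatMul F x y


/-- `û_i := −2â₀ + (â_i + â_{−i}) + 2ŝ_{0̄,i}`. -/
noncomputable def uHat (i : ℕ) : HatH F :=
  (-2 : F) • aHat F 0 + (aHat F (i : ℤ) + aHat F (-(i : ℤ))) + (2 : F) • sHat F 0 i

/-- `v̂_i := −2â₀ + (â_i + â_{−i}) − ŝ_{0̄,i}`. -/
noncomputable def vHat (i : ℕ) : HatH F :=
  (-2 : F) • aHat F 0 + (aHat F (i : ℤ) + aHat F (-(i : ℤ))) - sHat F 0 i

/-- `ŵ_i := â_i − â_{−i}`. -/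
noncomputable def wHat (i : ℕ) : HatH F := aHat F (i : ℤ) - aHat F (-(i : ℤ))

/-- `ū_i := −2â₀ + (â_{−i} + â_i) − (ŝ_{0̄,i} + ŝ_{1̄,i} + ŝ_{2̄,i})`. -/
noncomputable def ubar (i : ℕ) : HatH F :=
  (-2 : F) • aHat F 0 + (aHat F (-(i : ℤ)) + aHat F (i : ℤ))
    - (sHat F 0 i + sHat F 1 i + sHat F 2 i)

/-- `w̄_i := ŝ_{1̄,i} − ŝ_{2̄,i}`. -/
noncomputable def wbar (i : ℕ) : HatH F := sHat F 1 i - sHat F 2 i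

/-- `H₀ := span{û_i, ū_i : i ∈ ℤ₊}`. -/
noncomputable def H0 : Submodule F (HatH F) :=
  Submodule.span F {x | ∃ i : ℕ, 0 < i ∧ (x = uHat F i ∨ x = ubar F i)}

/-- `H₂ := span{v̂_i : i ∈ ℤ₊}`. -/
noncomputable def H2 : Submodule F (HatH F) :=
  Submodule.span F {x | ∃ i : ℕ, 0 < i ∧ x = vHat F i}

/-- `H₋₂ := span{ŵ_i, w̄_i : i ∈ ℤ₊}`. -/
noncomputable def Hm2 : Submodule F (HatH F) :=
  Submodule.span F {x | ∃ i : ℕ, 0 < i ∧ (x = wHat F i ∨ x = wbar F i)}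

theorem _root_.Module.End.isInternal_and_eq_eigenspace_of_le_of_iSup_eq_top
    {ι R M : Type*} [DecidableEq ι] [CommRing R] [IsDomain R] [AddCommGroup M]
    [Module R M] [Module.IsTorsionFree R M] {f : Module.End R M} {μ : ι → R}
    (hμ : Function.Injective μ)
    {N : ι → Submodule R M} (hle : ∀ i, N i ≤ f.eigenspace (μ i)) (htop : ⨆ i, N i = ⊤) :
    DirectSum.IsInternal N ∧ ∀ i, N i = f.eigenspace (μ i) := by
  have hind : iSupIndep fun i ↦ f.eigenspace (μ i) := f.eigenspaces_iSupIndep.comp hμ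
  have heq : N = fun i ↦ f.eigenspace (μ i) := (hind.le_iff_eq_of_iSup_eq_top htop).mp hle
  exact ⟨DirectSum.isInternal_submodule_of_iSupIndep_of_iSup_eq_top (heq ▸ hind) htop,
    congrFun heq⟩

variable {F}

local notation "ad₀" => hatMul F (aHat F 0)

theorem hatMul_single_single (b c : HatB) :
    hatMul F (Finsupp.single b 1) (Finsupp.single c 1) = mulB F b c := by
  simp [hatMul]

theorem sHat_zero_right (r : ZMod 3) : sHat F r 0 = 0 := by
  simp [sHat]

theorem sHat_of_not_dvd (r : ZMod 3) {j : ℕ} (h : ¬3 ∣ j) : sHat F r j = sHat F 0 j := by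
  have hj : j ≠ 0 := by rintro rfl; exact h (dvd_zero 3)
  simp only [sHat, dif_neg hj, dif_neg h]

theorem sHat_zero_eq_single {j : ℕ} (hj : 0 < j) :
    sHat F 0 j = Finsupp.single (HatB.s0 ⟨j, hj⟩) 1 := by
  by_cases h3 : 3 ∣ j <;> simp [sHat, hj.ne', h3]

theorem sHat_one_three_mul {k : ℕ} (hk : 0 < k) :
    sHat F 1 (3 * k) = Finsupp.single (HatB.s1 ⟨k, hk⟩) 1 := by
  simp [sHat, hk.ne']

theorem sHat_two_three_mul {k : ℕ} (hk : 0 < k) :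
    sHat F 2 (3 * k) = Finsupp.single (HatB.s2 ⟨k, hk⟩) 1 := by
  simp [sHat, hk.ne', (by decide : (2 : ZMod 3) ≠ 0), (by decide : (2 : ZMod 3) ≠ 1)]

theorem hatMul_aHat_aHat (i j : ℤ) :
    hatMul F (aHat F i) (aHat F j) =
      (-2 : F) • (aHat F i + aHat F j) + sHat F (i : ZMod 3) (i - j).natAbs :=
  hatMul_single_single _ _

theorem aMulS_of_not_dvd (i : ℤ) (r : ZMod 3) {j : ℕ} (h : ¬3 ∣ j) :
    aMulS F i r j = aMulS F i 0 j := by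
  simp only [aMulS, sHat_of_not_dvd _ h, sub_self, smul_zero]

theorem hatMul_aHat_sHat (i : ℤ) (r : ZMod 3) (j : ℕ) :
    hatMul F (aHat F i) (sHat F r j) = aMulS F i r j := by
  rcases Nat.eq_zero_or_pos j with rfl | hj
  · simp only [aMulS, sHat_zero_right, map_zero, Nat.cast_zero, sub_zero, add_zero, smul_zero]
    module
  by_cases h3 : 3 ∣ j
  · obtain ⟨k, rfl⟩ := h3
    have hk : 0 < k := by omega
    obtain rfl | rfl | rfl : r = 0 ∨ r = 1 ∨ r = 2 := by revert r; decide
    · rw [sHat_zero_eq_single hj]; exact hatMul_single_single _ _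
    · rw [sHat_one_three_mul hk]; exact hatMul_single_single _ _
    · rw [sHat_two_three_mul hk]; exact hatMul_single_single _ _
  · rw [sHat_of_not_dvd r h3, sHat_zero_eq_single hj, aMulS_of_not_dvd i r h3]
    exact hatMul_single_single _ _

theorem hatMul_aHat_zero_aHat (n : ℤ) :
    ad₀ (aHat F n) = (-2 : F) • (aHat F 0 + aHat F n) + sHat F 0 n.natAbs := by
  simp [hatMul_aHat_aHat]

theorem hatMul_aHat_zero_sHat_zero (j : ℕ) :
    ad₀ (sHat F 0 j) = (-2 : F) • aHat F 0 + (aHat F (-j) + aHat F j) - sHat F 0 j := by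
  simp [hatMul_aHat_sHat, aMulS, (by decide : hatC 0 0 = 0)]

theorem hatMul_aHat_zero_sHat_one (j : ℕ) :
    ad₀ (sHat F 1 j) =
      (-2 : F) • aHat F 0 + (aHat F (-j) + aHat F j) - sHat F 1 j
        - (sHat F 0 j - sHat F 2 j) := by
  simp [hatMul_aHat_sHat, aMulS, (by decide : hatC 0 1 = 1), (by decide : (1 + 1 : ZMod 3) = 2)]

theorem hatMul_aHat_zero_sHat_two (j : ℕ) :
    ad₀ (sHat F 2 j) =
      (-2 : F) • aHat F 0 + (aHat F (-j) + aHat F j) - sHat F 2 j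
        + (sHat F 1 j - sHat F 0 j) := by
  simp only [hatMul_aHat_sHat, aMulS, (by decide : hatC 0 2 = -1),
    (by decide : (2 - 1 : ZMod 3) = 1), (by decide : (2 + 1 : ZMod 3) = 0), Int.cast_zero,
    Int.cast_neg, Int.cast_one, zero_sub, zero_add, neg_smul, one_smul, neg_sub]
  abel

theorem hatMul_aHat_zero_self : ad₀ (aHat F 0) = (-4 : F) • aHat F 0 := by
  rw [hatMul_aHat_zero_aHat, Int.natAbs_zero, sHat_zero_right]
  module

theorem hatMul_aHat_zero_uHat (i : ℕ) : ad₀ (uHat F i) = 0 := by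
  simp only [uHat, map_add, map_smul, hatMul_aHat_zero_aHat, hatMul_aHat_zero_sHat_zero,
    Int.natAbs_neg, Int.natAbs_natCast, Int.natAbs_zero, sHat_zero_right]
  module

theorem hatMul_aHat_zero_vHat (i : ℕ) : ad₀ (vHat F i) = (-3 : F) • vHat F i := by
  simp only [vHat, map_add, map_sub, map_smul, hatMul_aHat_zero_aHat,
    hatMul_aHat_zero_sHat_zero, Int.natAbs_neg, Int.natAbs_natCast, Int.natAbs_zero,
    sHat_zero_right]
  module

theorem hatMul_aHat_zero_wHat (i : ℕ) : ad₀ (wHat F i) = (-2 : F) • wHat F i := by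
  simp only [wHat, map_sub, hatMul_aHat_zero_aHat, Int.natAbs_neg, Int.natAbs_natCast]
  module

theorem hatMul_aHat_zero_ubar (i : ℕ) : ad₀ (ubar F i) = (-5 : F) • vHat F i := by
  simp only [ubar, vHat, map_add, map_sub, map_smul, hatMul_aHat_zero_aHat,
    hatMul_aHat_zero_sHat_zero, hatMul_aHat_zero_sHat_one, hatMul_aHat_zero_sHat_two,
    Int.natAbs_neg, Int.natAbs_natCast, Int.natAbs_zero, sHat_zero_right]
  module

theorem hatMul_aHat_zero_wbar (i : ℕ) : ad₀ (wbar F i) = (-2 : F) • wbar F i := by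
  simp only [wbar, map_sub, hatMul_aHat_zero_sHat_one, hatMul_aHat_zero_sHat_two]
  module

theorem span_aHat_zero_le_eigenspace :
    Submodule.span F {aHat F 0} ≤ Module.End.eigenspace ad₀ (-4) := by
  rw [Submodule.span_singleton_le_iff_mem, Module.End.mem_eigenspace_iff]
  exact hatMul_aHat_zero_self

theorem H0_le_eigenspace [CharP F 5] : H0 F ≤ Module.End.eigenspace ad₀ 0 := by
  rw [H0, Submodule.span_le]
  rintro x ⟨i, -, rfl | rfl⟩ <;> rw [SetLike.mem_coe, Module.End.mem_eigenspace_iff, zero_smul]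
  · exact hatMul_aHat_zero_uHat i
  · rw [hatMul_aHat_zero_ubar, CharP.ofNat_eq_zero F 5, neg_zero, zero_smul]

theorem H2_le_eigenspace : H2 F ≤ Module.End.eigenspace ad₀ (-3) := by
  rw [H2, Submodule.span_le]
  rintro x ⟨i, -, rfl⟩
  exact Module.End.mem_eigenspace_iff.mpr (hatMul_aHat_zero_vHat i)

theorem Hm2_le_eigenspace : Hm2 F ≤ Module.End.eigenspace ad₀ (-2) := by
  rw [Hm2, Submodule.span_le]
  rintro x ⟨i, -, rfl | rfl⟩ <;> rw [SetLike.mem_coe, Module.End.mem_eigenspace_iff]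
  · exact hatMul_aHat_zero_wHat i
  · exact hatMul_aHat_zero_wbar i

theorem six_smul_aHat (i : ℕ) :
    (6 : F) • aHat F i =
      (6 : F) • aHat F 0 + uHat F i + (2 : F) • vHat F i + (3 : F) • wHat F i := by
  simp only [uHat, vHat, wHat]
  module

theorem six_smul_aHat_neg (i : ℕ) :
    (6 : F) • aHat F (-i) =
      (6 : F) • aHat F 0 + uHat F i + (2 : F) • vHat F i - (3 : F) • wHat F i := by
  simp only [uHat, vHat, wHat]
  module

theorem six_smul_sHat_zero (j : ℕ) :
    (6 : F) • sHat F 0 j = (2 : F) • uHat F j - (2 : F) • vHat F j := by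
  simp only [uHat, vHat]
  module

theorem six_smul_sHat_one (j : ℕ) :
    (6 : F) • sHat F 1 j = (3 : F) • vHat F j - (3 : F) • ubar F j + (3 : F) • wbar F j := by
  simp only [vHat, ubar, wbar]
  module

theorem six_smul_sHat_two (j : ℕ) :
    (6 : F) • sHat F 2 j = (3 : F) • vHat F j - (3 : F) • ubar F j - (3 : F) • wbar F j := by
  simp only [vHat, ubar, wbar]
  module

theorem six_smul_single_mem {M : Submodule F (HatH F)}
    (hspan : Submodule.span F {aHat F 0} ≤ M) (hH0 : H0 F ≤ M) (hH2 : H2 F ≤ M)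
    (hHm2 : Hm2 F ≤ M) (b : HatB) : (6 : F) • Finsupp.single b 1 ∈ M := by
  have ha0 : aHat F 0 ∈ M := hspan (Submodule.mem_span_singleton_self _)
  have hu (i : ℕ) (hi : 0 < i) : uHat F i ∈ M :=
    hH0 (Submodule.subset_span ⟨i, hi, .inl rfl⟩)
  have hub (i : ℕ) (hi : 0 < i) : ubar F i ∈ M :=
    hH0 (Submodule.subset_span ⟨i, hi, .inr rfl⟩)
  have hv (i : ℕ) (hi : 0 < i) : vHat F i ∈ M :=
    hH2 (Submodule.subset_span ⟨i, hi, rfl⟩)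
  have hw (i : ℕ) (hi : 0 < i) : wHat F i ∈ M :=
    hHm2 (Submodule.subset_span ⟨i, hi, .inl rfl⟩)
  have hwb (i : ℕ) (hi : 0 < i) : wbar F i ∈ M :=
    hHm2 (Submodule.subset_span ⟨i, hi, .inr rfl⟩)
  rcases b with n | ⟨j, hj⟩ | ⟨k, hk⟩ | ⟨k, hk⟩
  · obtain ⟨i, rfl | rfl⟩ := Int.eq_nat_or_neg n <;>
      rcases Nat.eq_zero_or_pos i with rfl | hi
    · exact M.smul_mem _ ha0
    · rw [← aHat, six_smul_aHat]
      exact add_mem (add_mem (add_mem (M.smul_mem _ ha0) (hu i hi))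
        (M.smul_mem _ (hv i hi))) (M.smul_mem _ (hw i hi))
    · rw [Nat.cast_zero, neg_zero, ← aHat]
      exact M.smul_mem _ ha0
    · rw [← aHat, six_smul_aHat_neg]
      exact sub_mem (add_mem (add_mem (M.smul_mem _ ha0) (hu i hi))
        (M.smul_mem _ (hv i hi))) (M.smul_mem _ (hw i hi))
  · rw [← sHat_zero_eq_single, six_smul_sHat_zero]
    exact sub_mem (M.smul_mem _ (hu j hj)) (M.smul_mem _ (hv j hj))
  · have hk3 : 0 < 3 * k := by positivity
    rw [← sHat_one_three_mul, six_smul_sHat_one]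
    exact add_mem (sub_mem (M.smul_mem _ (hv _ hk3)) (M.smul_mem _ (hub _ hk3)))
      (M.smul_mem _ (hwb _ hk3))
  · have hk3 : 0 < 3 * k := by positivity
    rw [← sHat_two_three_mul, six_smul_sHat_two]
    exact sub_mem (sub_mem (M.smul_mem _ (hv _ hk3)) (M.smul_mem _ (hub _ hk3)))
      (M.smul_mem _ (hwb _ hk3))

theorem eq_top_of_span_aHat_zero_le {M : Submodule F (HatH F)} (h6 : (6 : F) ≠ 0)
    (hspan : Submodule.span F {aHat F 0} ≤ M) (hH0 : H0 F ≤ M) (hH2 : H2 F ≤ M)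
    (hHm2 : Hm2 F ≤ M) : M = ⊤ := by
  rw [eq_top_iff, ← Finsupp.basisSingleOne.span_eq, Submodule.span_le]
  rintro _ ⟨b, rfl⟩
  exact (Submodule.smul_mem_iff M h6).mp (by simpa using six_smul_single_mem hspan hH0 hH2 hHm2 b)

theorem eigenvalues_injective [CharP F 5] : Function.Injective ![(-4 : F), 0, -3, -2] := by
  have hcast : ![(-4 : F), 0, -3, -2] = ZMod.castHom (dvd_refl 5) F ∘ ![-4, 0, -3, -2] := by
    ext z
    fin_cases z <;> simp [-ZMod.castHom_apply, map_ofNat]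
  rw [hcast]
  exact (ZMod.castHom_injective F).comp (by decide)

/-- `Ĥ = 𝔽·â₀ ⊕ H₀ ⊕ H₂ ⊕ H₋₂` as an internal direct sum, and for
`z ∈ {0, 2, −2}` the subspace `H_z` is the `z`-eigenspace of `ad_{â₀}`. -/
theorem eigenspace_decomposition [CharP F 5] :
    DirectSum.IsInternal
      (fun z : Fin 4 => ![Submodule.span F {aHat F 0}, H0 F, H2 F, Hm2 F] z) ∧
      H0 F = Module.End.eigenspace (hatMul F (aHat F 0)) 0 ∧
      H2 F = Module.End.eigenspace (hatMul F (aHat F 0)) 2 ∧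
      Hm2 F = Module.End.eigenspace (hatMul F (aHat F 0)) (-2) := by
  set N : Fin 4 → Submodule F (HatH F) := ![Submodule.span F {aHat F 0}, H0 F, H2 F, Hm2 F]
  have h5 : (5 : F) = 0 := CharP.ofNat_eq_zero F 5
  have hle (z : Fin 4) : N z ≤ Module.End.eigenspace ad₀ (![-4, 0, -3, -2] z) := by
    fin_cases z
    exacts [span_aHat_zero_le_eigenspace, H0_le_eigenspace, H2_le_eigenspace, Hm2_le_eigenspace]
  have h6 : (6 : F) ≠ 0 := by
    rw [show (6 : F) = 1 by linear_combination h5]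
    exact one_ne_zero
  have htop : ⨆ z, N z = ⊤ :=
    eq_top_of_span_aHat_zero_le h6 (le_iSup N 0) (le_iSup N 1) (le_iSup N 2) (le_iSup N 3)
  obtain ⟨hint, heig⟩ :=
    Module.End.isInternal_and_eq_eigenspace_of_le_of_iSup_eq_top eigenvalues_injective hle htop
  refine ⟨hint, heig 1, ?_, heig 3⟩
  rw [show (2 : F) = -3 by linear_combination h5]
  exact heig 2

end HatAlgebra
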